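/- Let d ∈ ℕ, T,R,q,c,C ∈ [0,∞), let (Ω,ℱ,ℙ) be a probability space, let X^x: [0,T]×Ω → ℝ^d, x ∈ ℝ^d, be stochastic processes, let ‖·‖ be a norm on ℝ^d, assume for all h ∈ ℝ^d with 0 < ‖h‖ < 1 that sup_{x: ‖x‖≤R} sup_{t∈[0,T]} E[‖X^{x+h}(t) − X^x(t)‖] ≤ c·|ln(‖h‖)|^{−q}, and assume that C = sup_{x: ‖x‖≤R} sup_{t∈[0,T]} E[‖X^x(t)‖]. Then for all x,y ∈ ℝ^d with ‖x‖ ≤ R, ‖y‖ ≤ R, and 0 < ‖x−y‖ ≠ 1 it holds that sup_{t∈[0,T]} E[‖X^x(t) − X^y(t)‖] ≤ max{c, 2C·|ln(2R+1)|^q}·|ln(‖x−y‖)|^{−q}. -/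

import Mathlib

open MeasureTheory ProbabilityTheory Filter
open scoped ENNReal NNReal

noncomputable section

/-!
If `‖x - y‖ < 1`, the bound is the hypothesis applied at `y` with increment `h = x - y`.
If `‖x - y‖ > 1`, the triangle inequality bounds the first moment of `X^x(t) - X^y(t)` by `2C`,
and `1 < ‖x - y‖ ≤ 2R + 1` gives `|ln(2R+1)|^q · |ln ‖x - y‖|^(-q) ≥ 1`.
Measurability of `ω ↦ ‖X^x(t, ω)‖`, needed to split the integral, holds because a norm on a
finite-dimensional space is convex, hence continuous.
-/

def IsNorm {E : Type*} [AddCommGroup E] [Module ℝ E] (N : E → ℝ) : Prop :=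
  (∀ x, N x = 0 ↔ x = 0) ∧ (∀ (a : ℝ) (x : E), N (a • x) = |a| * N x) ∧
    ∀ x y, N (x + y) ≤ N x + N y

namespace IsNorm

def toSeminorm {E : Type*} [AddCommGroup E] [Module ℝ E] {N : E → ℝ} (hN : IsNorm N) :
    Seminorm ℝ E :=
  Seminorm.of N hN.2.2 fun a x => by rw [hN.2.1, Real.norm_eq_abs]

@[simp]
theorem toSeminorm_apply {E : Type*} [AddCommGroup E] [Module ℝ E] {N : E → ℝ}
    (hN : IsNorm N) (x : E) : hN.toSeminorm x = N x :=
  rfl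

theorem continuous {E : Type*} [NormedAddCommGroup E] [NormedSpace ℝ E] [FiniteDimensional ℝ E]
    {N : E → ℝ} (hN : IsNorm N) : Continuous N :=
  continuousOn_univ.mp (hN.toSeminorm.convexOn.continuousOn isOpen_univ)

end IsNorm

theorem lintegral_ofReal_seminorm_sub_le {Ω E : Type*} [MeasurableSpace Ω] {μ : Measure Ω}
    [AddCommGroup E] [Module ℝ E] (p : Seminorm ℝ E) {f g : Ω → E}
    (hf : Measurable fun ω => p (f ω)) :
    ∫⁻ ω, ENNReal.ofReal (p (f ω - g ω)) ∂μ ≤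
      ∫⁻ ω, ENNReal.ofReal (p (f ω)) ∂μ + ∫⁻ ω, ENNReal.ofReal (p (g ω)) ∂μ := by
  rw [← lintegral_add_left hf.ennreal_ofReal]
  refine lintegral_mono fun ω => ?_
  rw [← ENNReal.ofReal_add (apply_nonneg p _) (apply_nonneg p _)]
  exact ENNReal.ofReal_le_ofReal (map_sub_le_add p _ _)

theorem one_le_abs_log_rpow_mul_abs_log_rpow_neg {a b q : ℝ} (ha : 1 < a) (hab : a ≤ b)
    (hq : 0 ≤ q) : 1 ≤ |Real.log b| ^ q * |Real.log a| ^ (-q) := by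
  have hlog_a : 0 < Real.log a := Real.log_pos ha
  have hlog_le : |Real.log a| ≤ |Real.log b| := by
    rw [abs_of_pos hlog_a, abs_of_pos (hlog_a.trans_le (Real.log_le_log (by linarith) hab))]
    exact Real.log_le_log (by linarith) hab
  rw [Real.rpow_neg (abs_nonneg _), ← div_eq_mul_inv,
    one_le_div (Real.rpow_pos_of_pos (abs_pos.mpr hlog_a.ne') q)]
  exact Real.rpow_le_rpow (abs_nonneg _) hlog_le hq

theorem log_hoelder_on_ball
    (d : ℕ) (T R q c C : ℝ)
    (hq : 0 ≤ q) (hC0 : 0 ≤ C)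
    {Ω : Type*} [MeasurableSpace Ω] (P : Measure Ω)
    (Nd : (Fin d → ℝ) → ℝ) (hNd : IsNorm Nd)
    (X : (Fin d → ℝ) → ℝ → Ω → (Fin d → ℝ))
    (hXmeas : ∀ x : Fin d → ℝ, ∀ t ∈ Set.Icc (0 : ℝ) T,
      Measurable (fun ω => X x t ω))
    (hhol : ∀ h : Fin d → ℝ, 0 < Nd h → Nd h < 1 →
      ∀ x : Fin d → ℝ, Nd x ≤ R → ∀ t ∈ Set.Icc (0 : ℝ) T,
        (∫⁻ ω, ENNReal.ofReal (Nd (X (x + h) t ω - X x t ω)) ∂P) ≤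
          ENNReal.ofReal (c * |Real.log (Nd h)| ^ (-q)))
    (hCsup : (⨆ x ∈ {z : Fin d → ℝ | Nd z ≤ R}, ⨆ t ∈ Set.Icc (0 : ℝ) T,
      ∫⁻ ω, ENNReal.ofReal (Nd (X x t ω)) ∂P) = ENNReal.ofReal C) :
    ∀ x y : Fin d → ℝ, Nd x ≤ R → Nd y ≤ R →
      0 < Nd (x - y) → Nd (x - y) ≠ 1 →
      ∀ t ∈ Set.Icc (0 : ℝ) T,
        (∫⁻ ω, ENNReal.ofReal (Nd (X x t ω - X y t ω)) ∂P) ≤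
          ENNReal.ofReal (max c (2 * C * |Real.log (2 * R + 1)| ^ q) *
            |Real.log (Nd (x - y))| ^ (-q)) := by
  intro x y hx hy hpos hne t ht
  have hweight : 0 ≤ |Real.log (Nd (x - y))| ^ (-q) := by positivity
  rcases hne.lt_or_gt with hsmall | hlarge
  · have hstep := hhol (x - y) hpos hsmall y hy t ht
    rw [add_sub_cancel] at hstep
    exact hstep.trans <| ENNReal.ofReal_le_ofReal <|
      mul_le_mul_of_nonneg_right (le_max_left _ _) hweight
  have hmoment : ∀ z, Nd z ≤ R → ∫⁻ ω, ENNReal.ofReal (Nd (X z t ω)) ∂P ≤ ENNReal.ofReal C :=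
    fun z hz => hCsup ▸ le_iSup₂_of_le (f := fun z _ => ⨆ s ∈ Set.Icc (0 : ℝ) T,
      ∫⁻ ω, ENNReal.ofReal (Nd (X z s ω)) ∂P) z hz (le_iSup₂_of_le t ht le_rfl)
  have hdist : Nd (x - y) ≤ 2 * R + 1 := by
    have := map_sub_le_add hNd.toSeminorm x y
    simp only [IsNorm.toSeminorm_apply] at this
    linarith
  calc ∫⁻ ω, ENNReal.ofReal (Nd (X x t ω - X y t ω)) ∂P
      ≤ ∫⁻ ω, ENNReal.ofReal (Nd (X x t ω)) ∂P + ∫⁻ ω, ENNReal.ofReal (Nd (X y t ω)) ∂P :=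
        lintegral_ofReal_seminorm_sub_le hNd.toSeminorm
          (hNd.continuous.measurable.comp (hXmeas x t ht))
    _ ≤ ENNReal.ofReal C + ENNReal.ofReal C := add_le_add (hmoment x hx) (hmoment y hy)
    _ = ENNReal.ofReal (2 * C * 1) := by rw [← ENNReal.ofReal_add hC0 hC0, two_mul, mul_one]
    _ ≤ ENNReal.ofReal
          (2 * C * |Real.log (2 * R + 1)| ^ q * |Real.log (Nd (x - y))| ^ (-q)) := by
        rw [mul_assoc (2 * C)]
        exact ENNReal.ofReal_le_ofReal <| mul_le_mul_of_nonneg_left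
          (one_le_abs_log_rpow_mul_abs_log_rpow_neg hlarge hdist hq) (by positivity)
    _ ≤ _ :=
        ENNReal.ofReal_le_ofReal <| mul_le_mul_of_nonneg_right (le_max_right _ _) hweight
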